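/- arXiv:math/0112297 — 3 statements merged into one kernel-verified Lean document; each statement's English description precedes it below -/
import Mathlib

section
/- Let n, m ≥ 1, set r = min(n,m), let δ ∈ (0,1), and let λ₁,…,λ_r be nonnegative real numbers with ∑_{i=1}^r λᵢ² ≤ 1 − δ. Then for every family of real numbers (h_{α i k}) with α ∈ {1,…,m} and i, k ∈ {1,…,n}, one has ∑_{α,i,k} h_{α i k}² − 2 ∑_{k=1}^n ∑_{1 ≤ i < j ≤ r} λᵢ λⱼ ( h_{i i k} h_{j j k} − h_{j i k} h_{i j k} ) ≥ δ ∑_{α,i,k} h_{α i k}². (Non-negativity, with gap δ|A|², of the quadratic second-fundamental-form terms in the evolution equation of *Ω₁.) -/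
/-!
Fix the tangent index `k` and write `G p q = h_{p q k}` for `p, q ≤ r`. By AM-GM, for `i < j`,
`2 λᵢλⱼ (G_ii G_jj − G_ji G_ij) ≤ λⱼ² (G_ii² + G_ij²) + λᵢ² (G_jj² + G_ji²)`,
so the sum over `i < j` is at most `∑_i ∑_{j ≠ i} λⱼ² (G_ii² + G_ij²)`. In row `i` the weights
`λⱼ²` (`j ≠ i`) add up to at most `∑ λ²` and each is at most `∑ λ²`, so row `i` contributes at most
`(∑ λ²) ∑_j G_ij²`. Summing over `k`, and since the entries `G_pq` are among the `h_{α i k}`,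
the cross term is at most `(∑ λ²) |A|² ≤ (1 - δ) |A|²`.
-/

open Finset

theorem sum_comp_le_sum_of_injective {ι α : Type*} [Fintype ι] [Fintype α] {e : ι → α}
    (he : Function.Injective e) {f : α → ℝ} (hf : ∀ a, 0 ≤ f a) :
    ∑ p, f (e p) ≤ ∑ a, f a :=
  (sum_map univ ⟨e, he⟩ f).symm.le.trans (sum_le_univ_sum_of_nonneg hf)

theorem sum_sum_comp_le_sum_sum_of_injective {ι κ α β : Type*} [Fintype ι] [Fintype κ]
    [Fintype α] [Fintype β] {e₁ : ι → α} {e₂ : κ → β} (he₁ : Function.Injective e₁)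
    (he₂ : Function.Injective e₂) {f : α → β → ℝ} (hf : ∀ a b, 0 ≤ f a b) :
    ∑ p, ∑ q, f (e₁ p) (e₂ q) ≤ ∑ a, ∑ b, f a b :=
  calc ∑ p, ∑ q, f (e₁ p) (e₂ q) ≤ ∑ p, ∑ b, f (e₁ p) b :=
        sum_le_sum fun p _ => sum_comp_le_sum_of_injective he₂ (hf (e₁ p))
    _ ≤ ∑ a, ∑ b, f a b :=
        sum_comp_le_sum_of_injective he₁ fun a => sum_nonneg fun b _ => hf a b

theorem sum_compl_mul_sq_add_sq_le {ι : Type*} [Fintype ι] [DecidableEq ι] {c : ι → ℝ}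
    (hc : ∀ j, 0 ≤ c j) (x : ι → ℝ) (i : ι) :
    ∑ j ∈ {i}ᶜ, c j * (x i ^ 2 + x j ^ 2) ≤ (∑ j, c j) * ∑ j, x j ^ 2 := by
  have hc_le : ∀ j, c j ≤ ∑ j, c j := fun j => single_le_sum (fun j _ => hc j) (mem_univ j)
  have hcompl_le : ∑ j ∈ {i}ᶜ, c j ≤ ∑ j, c j := sum_le_univ_sum_of_nonneg hc
  calc ∑ j ∈ {i}ᶜ, c j * (x i ^ 2 + x j ^ 2)
        = (∑ j ∈ {i}ᶜ, c j) * x i ^ 2 + ∑ j ∈ {i}ᶜ, c j * x j ^ 2 := by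
          simp only [mul_add, sum_add_distrib, sum_mul]
    _ ≤ (∑ j, c j) * x i ^ 2 + ∑ j ∈ {i}ᶜ, (∑ j, c j) * x j ^ 2 := by
          gcongr with j
          exact hc_le j
    _ = (∑ j, c j) * ∑ j, x j ^ 2 := by
          rw [Fintype.sum_eq_add_sum_compl i (fun j => x j ^ 2), mul_add, mul_sum]

theorem two_mul_sum_Ioi_mul_minor_le {ι : Type*} [Fintype ι] [LinearOrder ι]
    [LocallyFiniteOrderTop ι] [LocallyFiniteOrderBot ι] (lam : ι → ℝ) (G : ι → ι → ℝ) :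
    2 * ∑ i, ∑ j ∈ Ioi i, lam i * lam j * (G i i * G j j - G j i * G i j) ≤
      (∑ i, lam i ^ 2) * ∑ i, ∑ j, G i j ^ 2 := by
  classical
  have amgm : ∀ i j, 2 * (lam i * lam j * (G i i * G j j - G j i * G i j)) ≤
      lam j ^ 2 * (G i i ^ 2 + G i j ^ 2) + lam i ^ 2 * (G j j ^ 2 + G j i ^ 2) := fun i j => by
    nlinarith [sq_nonneg (lam j * G i i - lam i * G j j), sq_nonneg (lam j * G i j + lam i * G j i)]
  calc 2 * ∑ i, ∑ j ∈ Ioi i, lam i * lam j * (G i i * G j j - G j i * G i j)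
        = ∑ i, ∑ j ∈ Ioi i, 2 * (lam i * lam j * (G i i * G j j - G j i * G i j)) := by
          simp only [mul_sum]
    _ ≤ ∑ i, ∑ j ∈ Ioi i,
          (lam j ^ 2 * (G i i ^ 2 + G i j ^ 2) + lam i ^ 2 * (G j j ^ 2 + G j i ^ 2)) :=
          sum_le_sum fun i _ => sum_le_sum fun j _ => amgm i j
    _ = ∑ i, ∑ j ∈ {i}ᶜ, lam j ^ 2 * (G i i ^ 2 + G i j ^ 2) :=
          sum_sum_Ioi_add_eq_sum_sum_off_diag fun j i => lam j ^ 2 * (G i i ^ 2 + G i j ^ 2)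
    _ ≤ ∑ i, (∑ j, lam j ^ 2) * ∑ j, G i j ^ 2 :=
          sum_le_sum fun i _ => sum_compl_mul_sq_add_sq_le (fun j => sq_nonneg (lam j)) (G i) i
    _ = (∑ i, lam i ^ 2) * ∑ i, ∑ j, G i j ^ 2 := (mul_sum _ _ _).symm

theorem two_mul_sum_sum_Ioi_mul_minor_comp_le {ι α β κ : Type*} [Fintype ι] [LinearOrder ι]
    [LocallyFiniteOrderTop ι] [LocallyFiniteOrderBot ι] [Fintype α] [Fintype β] [Fintype κ]
    {e₁ : ι → α} {e₂ : ι → β} (he₁ : Function.Injective e₁) (he₂ : Function.Injective e₂)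
    (lam : ι → ℝ) (h : α → β → κ → ℝ) :
    2 * ∑ k, ∑ i, ∑ j ∈ Ioi i, lam i * lam j *
        (h (e₁ i) (e₂ i) k * h (e₁ j) (e₂ j) k - h (e₁ j) (e₂ i) k * h (e₁ i) (e₂ j) k) ≤
      (∑ i, lam i ^ 2) * ∑ a, ∑ b, ∑ k, h a b k ^ 2 :=
  calc _ = ∑ k, 2 * ∑ i, ∑ j ∈ Ioi i, lam i * lam j *
        (h (e₁ i) (e₂ i) k * h (e₁ j) (e₂ j) k - h (e₁ j) (e₂ i) k * h (e₁ i) (e₂ j) k) :=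
        mul_sum _ _ _
    _ ≤ ∑ k, (∑ i, lam i ^ 2) * ∑ p, ∑ q, h (e₁ p) (e₂ q) k ^ 2 :=
        sum_le_sum fun k _ => two_mul_sum_Ioi_mul_minor_le lam fun p q => h (e₁ p) (e₂ q) k
    _ ≤ ∑ k, (∑ i, lam i ^ 2) * ∑ a, ∑ b, h a b k ^ 2 := by
        gcongr with k
        exact sum_sum_comp_le_sum_sum_of_injective he₁ he₂ fun a b => sq_nonneg (h a b k)
    _ = (∑ i, lam i ^ 2) * ∑ a, ∑ b, ∑ k, h a b k ^ 2 := by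
        rw [← mul_sum, sum_comm]
        exact congrArg _ (sum_congr rfl fun a _ => sum_comm)

theorem second_fundamental_form_quadratic_term_nonneg_general
    (n m : ℕ) (δ : ℝ)
    (lam : Fin (min n m) → ℝ)
    (hsum : ∑ i, lam i ^ 2 ≤ 1 - δ)
    (h : Fin m → Fin n → Fin n → ℝ) :
    δ * (∑ α, ∑ i, ∑ k, h α i k ^ 2) ≤
      (∑ α, ∑ i, ∑ k, h α i k ^ 2) -
        2 * ∑ k : Fin n, ∑ i : Fin (min n m), ∑ j ∈ Finset.Ioi i,
          lam i * lam j *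
            (h (Fin.castLE (min_le_right n m) i) (Fin.castLE (min_le_left n m) i) k *
                h (Fin.castLE (min_le_right n m) j) (Fin.castLE (min_le_left n m) j) k -
              h (Fin.castLE (min_le_right n m) j) (Fin.castLE (min_le_left n m) i) k *
                h (Fin.castLE (min_le_right n m) i) (Fin.castLE (min_le_left n m) j) k) := by
  have h_cross := two_mul_sum_sum_Ioi_mul_minor_comp_le
    (Fin.castLE_injective (min_le_right n m)) (Fin.castLE_injective (min_le_left n m)) lam h
  have h_weight : (∑ i, lam i ^ 2) * ∑ α, ∑ i, ∑ k, h α i k ^ 2 ≤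
      (1 - δ) * ∑ α, ∑ i, ∑ k, h α i k ^ 2 :=
    mul_le_mul_of_nonneg_right hsum (by positivity)
  linarith

/-- Non-negativity, with gap `δ|A|²`, of the quadratic second-fundamental-form terms in
the evolution equation of `*Ω₁`: if `r = min(n,m)`, `δ ∈ (0,1)` and `λ₁,…,λ_r ≥ 0` with
`∑ λᵢ² ≤ 1 − δ`, then for every real array `(h_{α i k})`,
`∑ h² − 2 ∑_k ∑_{i<j} λᵢλⱼ (h_{iik} h_{jjk} − h_{jik} h_{ijk}) ≥ δ ∑ h²`. -/
theorem second_fundamental_form_quadratic_term_nonneg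
    (n m : ℕ) (hn : 1 ≤ n) (hm : 1 ≤ m) (δ : ℝ) (hδ : δ ∈ Set.Ioo (0 : ℝ) 1)
    (lam : Fin (min n m) → ℝ) (hnonneg : ∀ i, 0 ≤ lam i)
    (hsum : ∑ i, lam i ^ 2 ≤ 1 - δ)
    (h : Fin m → Fin n → Fin n → ℝ) :
    δ * (∑ α, ∑ i, ∑ k, h α i k ^ 2) ≤
      (∑ α, ∑ i, ∑ k, h α i k ^ 2) -
        2 * ∑ k : Fin n, ∑ i : Fin (min n m), ∑ j ∈ Finset.Ioi i,
          lam i * lam j *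
            (h (Fin.castLE (min_le_right n m) i) (Fin.castLE (min_le_left n m) i) k *
                h (Fin.castLE (min_le_right n m) j) (Fin.castLE (min_le_left n m) j) k -
              h (Fin.castLE (min_le_right n m) j) (Fin.castLE (min_le_left n m) i) k *
                h (Fin.castLE (min_le_right n m) i) (Fin.castLE (min_le_left n m) j) k) :=
  second_fundamental_form_quadratic_term_nonneg_general n m δ lam hsum h
end

section
/- Let n ≥ 2, let k₁, k₂ be real numbers with k₁ ≥ |k₂| and k₁ + k₂ > 0, let δ ∈ (0,1), and let λ₁,…,λ_n be real numbers with λⱼ² ≤ 1 − δ for all j. Then for every index i ∈ {1,…,n}: k₁ ∑_{j ≠ i} 1/(1+λⱼ²) + k₂ ( 1 − n + ∑_{j ≠ i} 1/(1+λⱼ²) ) ≥ (n−1)( k₁ − (1−δ) k₂ )/(2−δ), and this lower bound is strictly positive. -/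
/-! Each `1 / (1 + λⱼ²)` is at least `1 / (2 - δ)`, and the curvature term equals
`(k₁ + k₂) ∑_{j ≠ i} 1 / (1 + λⱼ²) - (n - 1) k₂`, which is increasing in the sum because
`k₁ + k₂ > 0`. Positivity of the bound is `(1 - δ) k₂ ≤ (1 - δ) |k₂| < k₁`. -/

open Finset

theorem card_div_le_sum_one_div_one_add_sq {ι : Type*} (s : Finset ι) (f : ι → ℝ) {c : ℝ}
    (hf : ∀ j ∈ s, f j ^ 2 ≤ c) :
    (#s : ℝ) / (1 + c) ≤ ∑ j ∈ s, 1 / (1 + f j ^ 2) := by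
  calc (#s : ℝ) / (1 + c) = ∑ _j ∈ s, 1 / (1 + c) := by simp [div_eq_mul_inv]
    _ ≤ ∑ j ∈ s, 1 / (1 + f j ^ 2) :=
      sum_le_sum fun j hj => one_div_le_one_div_of_le (by positivity) (by linarith [hf j hj])

theorem card_univ_erase_fin {n : ℕ} (i : Fin n) : (#(univ.erase i) : ℝ) = n - 1 := by
  rw [card_erase_of_mem (mem_univ i), card_univ, Fintype.card_fin,
    Nat.cast_sub i.pos, Nat.cast_one]

theorem sub_mul_pos_of_abs_le {k₁ k₂ c : ℝ} (hk : |k₂| ≤ k₁) (hk₁ : 0 < k₁) (hc : |c| < 1) :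
    0 < k₁ - c * k₂ :=
  sub_pos.mpr <| calc c * k₂ ≤ |c| * |k₂| := (le_abs_self _).trans (abs_mul c k₂).le
    _ ≤ |c| * k₁ := by gcongr
    _ < 1 * k₁ := by gcongr
    _ = k₁ := one_mul k₁

/-- Curvature term estimate with positive gap: if `n ≥ 2`, `k₁ ≥ |k₂|`, `k₁ + k₂ > 0`,
`δ ∈ (0,1)` and `λⱼ² ≤ 1 − δ` for all `j`, then for each `i`,
`k₁ ∑_{j≠i} 1/(1+λⱼ²) + k₂ (1 − n + ∑_{j≠i} 1/(1+λⱼ²)) ≥ (n−1)(k₁ − (1−δ)k₂)/(2−δ) > 0`. -/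
theorem curvature_term_positive
    (n : ℕ) (hn : 2 ≤ n) (k₁ k₂ : ℝ) (hk : |k₂| ≤ k₁) (hsum : 0 < k₁ + k₂)
    (δ : ℝ) (hδ : δ ∈ Set.Ioo (0 : ℝ) 1)
    (lam : Fin n → ℝ) (hlam : ∀ j, lam j ^ 2 ≤ 1 - δ) (i : Fin n) :
    (((n : ℝ) - 1) * (k₁ - (1 - δ) * k₂) / (2 - δ) ≤
        k₁ * (∑ j ∈ Finset.univ.erase i, 1 / (1 + lam j ^ 2)) +
          k₂ * (1 - (n : ℝ) + ∑ j ∈ Finset.univ.erase i, 1 / (1 + lam j ^ 2))) ∧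
      0 < ((n : ℝ) - 1) * (k₁ - (1 - δ) * k₂) / (2 - δ) := by
  obtain ⟨hδ₀, hδ₁⟩ := hδ
  set S := ∑ j ∈ univ.erase i, 1 / (1 + lam j ^ 2)
  have hS : ((n : ℝ) - 1) / (2 - δ) ≤ S := by
    have := card_div_le_sum_one_div_one_add_sq (univ.erase i) lam fun j _ => hlam j
    rwa [card_univ_erase_fin, show 1 + (1 - δ) = 2 - δ by ring] at this
  have hk₁ : 0 < k₁ := by linarith [le_abs_self k₂]
  have hgap : 0 < k₁ - (1 - δ) * k₂ :=
    sub_mul_pos_of_abs_le hk hk₁ (abs_lt.mpr ⟨by linarith, by linarith⟩)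
  have hn₁ : (1 : ℝ) < n := by exact_mod_cast hn
  have h2δ : (0 : ℝ) < 2 - δ := by linarith
  refine ⟨?_, by positivity⟩
  calc ((n : ℝ) - 1) * (k₁ - (1 - δ) * k₂) / (2 - δ)
      = (k₁ + k₂) * (((n : ℝ) - 1) / (2 - δ)) - ((n : ℝ) - 1) * k₂ := by
        field_simp [h2δ.ne']
        ring
    _ ≤ (k₁ + k₂) * S - ((n : ℝ) - 1) * k₂ := by gcongr
    _ = k₁ * S + k₂ * (1 - n + S) := by ring
end

section
/- Let V₁ and V₂ be finite-dimensional real inner product spaces with dim V₁ = n ≥ 2 and dim V₂ = m, let D : V₁ → V₂ be linear with adjoint D*, let (aᵢ), (b_α) be singular-value bases for D with singular values λᵢ, and set λ_{iα} := ⟨D aᵢ, b_α⟩. Let eᵢ := (1+λᵢ²)^{-1/2}(aᵢ, D aᵢ) and v_α := (1+‖D* b_α‖²)^{-1/2}(−D* b_α, b_α), and let Ω₁ be the alternating n-form on V₁ × V₂ obtained by composing the determinant form of the basis (aᵢ) of V₁ with the first projection in each argument. Then for all α, β ∈ {1,…,m}: Ω₁(v_α, v_β, e₃, …, e_n) = (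 λ_{1α} λ_{2β} − λ_{2α} λ_{1β} ) · ∏_{k=1}^n (1+λ_k²)^{-1/2}. -/
/-!
Only the `V₁`-components survive `Ω₁`: those of `v_α, v_β, e₃, …` are `−c_α D*b_α, −c_β D*b_β,
s₃ a₃, …` with `c_γ = (1+‖D*b_γ‖²)^{-1/2}` and `s_k = (1+λ_k²)^{-1/2}`. Pulling the scalars out
leaves the determinant of the basis `(aᵢ)` with its first two vectors replaced, which is the
`2 × 2` minor of their `a`-coordinates; the `aᵢ`-coordinate of `D*b_γ` is `λ_{iγ}`. Finally
`c_α c_β = s₁ s₂` whenever the minor is nonzero, since then `{α, β} = {1, 2}` and, by Parseval,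
`‖D*b_γ‖ = |λ_γ|`.
-/

open Function

namespace Module.Basis

variable {ι R M : Type*} [Fintype ι] [DecidableEq ι] [CommRing R] [AddCommGroup M] [Module R M]
  (e : Basis ι R M)

theorem det_update (i : ι) (x : M) : e.det (update e i x) = e.repr x i := by
  suffices e.det.toMultilinearMap.toLinearMap e i = e.coord i from LinearMap.congr_fun this x
  refine e.ext fun k => ?_
  simp only [MultilinearMap.toLinearMap_apply, AlternatingMap.coe_multilinearMap,
    coord_apply, repr_self]
  obtain rfl | hik := eq_or_ne i k
  · simp [det_self]
  · simpa [hik] using e.det.map_eq_zero_of_eq _ (by simp [hik.symm]) hik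

theorem det_update_update {i j : ι} (hij : i ≠ j) (x y : M) :
    e.det (update (update e i x) j y) = e.repr x i * e.repr y j - e.repr x j * e.repr y i := by
  suffices e.det.toMultilinearMap.toLinearMap (update e j y) i =
      e.repr y j • e.coord i - e.repr y i • e.coord j by
    simpa [update_comm hij, mul_comm] using LinearMap.congr_fun this x
  refine e.ext fun k => ?_
  simp only [MultilinearMap.toLinearMap_apply, AlternatingMap.coe_multilinearMap,
    LinearMap.sub_apply, LinearMap.smul_apply, coord_apply, repr_self, smul_eq_mul]
  obtain rfl | hik := eq_or_ne i k
  · rw [update_eq_self_iff.2 (update_of_ne hij _ _).symm, det_update]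
    simp [hij]
  obtain rfl | hjk := eq_or_ne j k
  · have hswap : update (update e j y) i (e j) ∘ Equiv.swap i j = update e i y := by
      ext l
      simp only [comp_apply, Equiv.swap_apply_def, update_apply]
      split_ifs <;> simp_all
    have hdet := e.det.map_swap (update (update e j y) i (e j)) hij
    rw [hswap, det_update] at hdet
    simp [hij, hdet]
  · rw [Finsupp.single_eq_of_ne hik, Finsupp.single_eq_of_ne hjk, mul_zero, mul_zero, sub_zero]
    exact e.det.map_eq_zero_of_eq _ (by simp [hik.symm, hjk.symm]) hik

end Module.Basis

theorem Finset.prod_update_update {ι M : Type*} [Fintype ι] [DecidableEq ι] [CommMonoid M]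
    (f : ι → M) {i j : ι} (hij : i ≠ j) (u v : M) :
    ∏ k, update (update f i u) j v k = u * v * ∏ k ∈ {i, j}ᶜ, f k := by
  rw [← prod_mul_prod_compl {i, j}, prod_pair hij]
  congr 1
  · simp [hij]
  · refine prod_congr rfl fun k hk => ?_
    simp only [mem_compl, mem_insert, mem_singleton, not_or] at hk
    simp [hk.1, hk.2]

open scoped RealInnerProductSpace
open LinearMap (adjoint)

section SingularValueBases

variable {V₁ V₂ : Type*} [NormedAddCommGroup V₁] [InnerProductSpace ℝ V₁]
  [NormedAddCommGroup V₂] [InnerProductSpace ℝ V₂] [FiniteDimensional ℝ V₁]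
  [FiniteDimensional ℝ V₂] {n m : ℕ} {D : V₁ →ₗ[ℝ] V₂} {a : OrthonormalBasis (Fin n) ℝ V₁}
  {b : OrthonormalBasis (Fin m) ℝ V₂} {lam : Fin n → ℝ}

theorem norm_adjoint_sq_of_inner_ne_zero
    (horth : ∀ (i : Fin n) (α : Fin m), (i : ℕ) ≠ (α : ℕ) → ⟪D (a i), b α⟫ = 0)
    (hlam : ∀ (i : Fin n) (α : Fin m), (i : ℕ) = (α : ℕ) → lam i = ⟪D (a i), b α⟫)
    {k : Fin n} {γ : Fin m} (hkγ : ⟪D (a k), b γ⟫ ≠ 0) :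
    ‖adjoint D (b γ)‖ ^ 2 = lam k ^ 2 := by
  have hk : (k : ℕ) = γ := not_imp_comm.1 (horth k γ) hkγ
  rw [← a.sum_sq_inner_right, Finset.sum_eq_single k, LinearMap.adjoint_inner_right,
    hlam k γ hk]
  · intro i _ hik
    rw [LinearMap.adjoint_inner_right, horth i γ (by rwa [← hk, ne_eq, ← Fin.ext_iff]), sq,
      mul_zero]
  · simp

theorem inv_sqrt_norm_adjoint_mul_minor
    (horth : ∀ (i : Fin n) (α : Fin m), (i : ℕ) ≠ (α : ℕ) → ⟪D (a i), b α⟫ = 0)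
    (hlam : ∀ (i : Fin n) (α : Fin m), (i : ℕ) = (α : ℕ) → lam i = ⟪D (a i), b α⟫)
    (i j : Fin n) (α β : Fin m) :
    (√(1 + ‖adjoint D (b α)‖ ^ 2))⁻¹ * (√(1 + ‖adjoint D (b β)‖ ^ 2))⁻¹ *
        (⟪D (a i), b α⟫ * ⟪D (a j), b β⟫ - ⟪D (a j), b α⟫ * ⟪D (a i), b β⟫) =
      (√(1 + lam i ^ 2))⁻¹ * (√(1 + lam j ^ 2))⁻¹ *
        (⟪D (a i), b α⟫ * ⟪D (a j), b β⟫ - ⟪D (a j), b α⟫ * ⟪D (a i), b β⟫) := by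
  have hnorm {k : Fin n} {γ : Fin m} (h : ⟪D (a k), b γ⟫ ≠ 0) :
      ‖adjoint D (b γ)‖ ^ 2 = lam k ^ 2 :=
    norm_adjoint_sq_of_inner_ne_zero horth hlam h
  obtain hmain | hmain := eq_or_ne (⟪D (a i), b α⟫ * ⟪D (a j), b β⟫) 0
  · obtain hanti | hanti := eq_or_ne (⟪D (a j), b α⟫ * ⟪D (a i), b β⟫) 0
    · rw [hmain, hanti, sub_self, mul_zero, mul_zero]
    · rw [hnorm (left_ne_zero_of_mul hanti), hnorm (right_ne_zero_of_mul hanti),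
        mul_comm (√_)⁻¹]
  · rw [hnorm (left_ne_zero_of_mul hmain), hnorm (right_ne_zero_of_mul hmain)]

end SingularValueBases

/-- For singular-value bases `(aᵢ)`, `(b_α)` of `D : V₁ → V₂` with `λ_{iα} = ⟨D aᵢ, b_α⟩`,
the adapted tangent vectors `eᵢ = (1+λᵢ²)^{-1/2}(aᵢ, D aᵢ)` and normal vectors
`v_α = (1+‖D* b_α‖²)^{-1/2}(−D* b_α, b_α)` satisfy, for the pullback `Ω₁` of the
determinant form of `(aᵢ)` under the first projection,
`Ω₁(v_α, v_β, e₃, …, e_n) = (λ_{1α}λ_{2β} − λ_{2α}λ_{1β}) ∏ₖ (1+λₖ²)^{-1/2}`. -/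
theorem omega_on_two_normal_vectors
    {V₁ V₂ : Type*} [NormedAddCommGroup V₁] [InnerProductSpace ℝ V₁]
    [NormedAddCommGroup V₂] [InnerProductSpace ℝ V₂]
    [FiniteDimensional ℝ V₁] [FiniteDimensional ℝ V₂]
    {n m : ℕ} (hn2 : 2 ≤ n)
    (D : V₁ →ₗ[ℝ] V₂)
    (a : OrthonormalBasis (Fin n) ℝ V₁) (b : OrthonormalBasis (Fin m) ℝ V₂)
    (lam : Fin n → ℝ)
    (horth : ∀ (i : Fin n) (α : Fin m), (i : ℕ) ≠ (α : ℕ) → (inner ℝ (D (a i)) (b α) : ℝ) = 0)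
    (hlam : ∀ (i : Fin n) (α : Fin m), (i : ℕ) = (α : ℕ) → lam i = (inner ℝ (D (a i)) (b α) : ℝ))
    (α β : Fin m) :
    (a.toBasis.det.compLinearMap (LinearMap.fst ℝ V₁ V₂))
        (fun k : Fin n =>
          if (k : ℕ) = 0 then
            (Real.sqrt (1 + ‖LinearMap.adjoint D (b α)‖ ^ 2))⁻¹ •
              ((-(LinearMap.adjoint D (b α)), b α) : V₁ × V₂)
          else if (k : ℕ) = 1 then
            (Real.sqrt (1 + ‖LinearMap.adjoint D (b β)‖ ^ 2))⁻¹ •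
              ((-(LinearMap.adjoint D (b β)), b β) : V₁ × V₂)
          else
            (Real.sqrt (1 + lam k ^ 2))⁻¹ • ((a k, D (a k)) : V₁ × V₂)) =
      ((inner ℝ (D (a ⟨0, by omega⟩)) (b α) : ℝ) * (inner ℝ (D (a ⟨1, by omega⟩)) (b β) : ℝ) -
          (inner ℝ (D (a ⟨1, by omega⟩)) (b α) : ℝ) * (inner ℝ (D (a ⟨0, by omega⟩)) (b β) : ℝ)) *
        ∏ k : Fin n, (Real.sqrt (1 + lam k ^ 2))⁻¹ := by
  set i₀ : Fin n := ⟨0, by omega⟩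
  set i₁ : Fin n := ⟨1, by omega⟩
  have hi : i₀ ≠ i₁ := by simp [i₀, i₁, Fin.ext_iff]
  set s : Fin n → ℝ := fun k => (√(1 + lam k ^ 2))⁻¹
  set c : Fin m → ℝ := fun γ => (√(1 + ‖adjoint D (b γ)‖ ^ 2))⁻¹
  calc _ = a.toBasis.det (fun k => update (update s i₀ (c α)) i₁ (c β) k •
        update (update ⇑a.toBasis i₀ (-adjoint D (b α))) i₁ (-adjoint D (b β)) k) := by
        rw [AlternatingMap.compLinearMap_apply]
        congr 1
        ext k
        simp only [update_apply, Fin.ext_iff, i₀, i₁]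
        split_ifs <;> simp_all [s, c]
    _ = _ := by
      rw [AlternatingMap.map_smul_univ, Module.Basis.det_update_update _ hi,
        Finset.prod_update_update _ hi, ← Finset.prod_mul_prod_compl {i₀, i₁}, Finset.prod_pair hi]
      simp only [map_neg, Finsupp.coe_neg, Pi.neg_apply, neg_mul_neg,
        OrthonormalBasis.coe_toBasis_repr_apply, OrthonormalBasis.repr_apply_apply,
        LinearMap.adjoint_inner_right, smul_eq_mul]
      linear_combination
        (∏ k ∈ {i₀, i₁}ᶜ, s k) * inv_sqrt_norm_adjoint_mul_minor horth hlam i₀ i₁ α β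
end
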